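/- Let $A = \theta I + U \in \mathrm{Mat}_n(F)$ where $U$ is strictly upper triangular over a field of fractions $F$ of rational functions in $t$ (with $\theta$ a scalar, $t$ a variable). Then each diagonal entry of $(A - tI)^{-1}$ equals $1/(\theta - t)$, and each strictly-above-diagonal entry of $(A - tI)^{-1}$, viewed as a rational function of $t$, is a linear combination $\sum_{k=2}^{n} d_k/(t - \theta)^k$ with $d_k \in F$ constants (i.e., its partial fraction expansion at $t = \theta$ has no term in $1/(t-\theta)$). -/

import Mathlib

/-!
Write `w = X - C θ`. Then `B = V - w • 1` with `V` the image of `U`, which is strictly upper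
triangular and hence nilpotent, so the Neumann series gives `B⁻¹ = -∑_{m<n} V ^ m / w ^ (m + 1)`.
The term `m = 0` is `-1 / w` on the diagonal and zero off it; all other terms vanish on the
diagonal and contribute only powers `w ^ k` with `k ≥ 2`.
-/

open Finset

namespace Matrix

variable {R : Type*} [Semiring R] {n : ℕ} {U : Matrix (Fin n) (Fin n) R}

theorem pow_apply_eq_zero_of_lt_add (hU : ∀ i j : Fin n, j ≤ i → U i j = 0) (m : ℕ)
    {i j : Fin n} (hij : (j : ℕ) < i + m) : (U ^ m) i j = 0 := by
  induction m generalizing j with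
  | zero => exact one_apply_ne (by rintro rfl; simp at hij)
  | succ m ih =>
    rw [pow_succ, mul_apply]
    refine sum_eq_zero fun k _ => ?_
    rcases lt_or_ge (k : ℕ) (i + m) with hk | hk
    · rw [ih hk, zero_mul]
    · rw [hU k j (by rw [Fin.le_iff_val_le_val]; omega), mul_zero]

theorem pow_card_eq_zero_of_strictUpperTriangular
    (hU : ∀ i j : Fin n, j ≤ i → U i j = 0) : U ^ n = 0 := by
  ext i j
  exact pow_apply_eq_zero_of_lt_add hU n (by omega)

end Matrix

theorem Matrix.inv_sub_scalar_of_pow_eq_zero {ι K : Type*} [Fintype ι] [DecidableEq ι] [Field K]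
    {V : Matrix ι ι K} {n : ℕ} (hV : V ^ n = 0) {w : K} (hw : w ≠ 0) :
    (V - scalar ι w)⁻¹ = -∑ m ∈ range n, (w ^ (m + 1))⁻¹ • V ^ m := by
  set N := w⁻¹ • V
  have hfactor : V - scalar ι w = -(w • (1 - N)) := by
    rw [smul_sub, smul_smul, mul_inv_cancel₀ hw, one_smul, neg_sub, smul_one_eq_diagonal]; rfl
  have hsum : ∑ m ∈ range n, (w ^ (m + 1))⁻¹ • V ^ m = w⁻¹ • ∑ m ∈ range n, N ^ m := by
    simp only [smul_sum, N, smul_pow, smul_smul, pow_succ', mul_inv, inv_pow]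
  apply inv_eq_right_inv
  rw [hfactor, hsum, neg_mul_neg, smul_mul, mul_smul_comm, smul_smul, mul_inv_cancel₀ hw, one_smul,
    mul_neg_geom_sum, smul_pow, hV, smul_zero, sub_zero]

theorem Finset.sum_range_eq_add_sum_Icc_two {M : Type*} [AddCommMonoid M] (f : ℕ → M) {n : ℕ}
    (hn : 0 < n) : ∑ m ∈ range n, f m = f 0 + ∑ k ∈ Icc 2 n, f (k - 1) := by
  rw [range_eq_Ico, sum_eq_sum_Ico_succ_bot hn, ← Ico_add_one_right_eq_Icc,
    ← sum_Ico_add' (fun k => f (k - 1)) 1 n 1]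
  simp

theorem stmt9 (F : Type*) [Field F] (n : ℕ) (θ : F)
    (U : Matrix (Fin n) (Fin n) F) (hU : ∀ i j : Fin n, j ≤ i → U i j = 0)
    (A : Matrix (Fin n) (Fin n) F) (hA : A = θ • 1 + U)
    (B : Matrix (Fin n) (Fin n) (RatFunc F))
    (hB : B = A.map (RatFunc.C : F →+* RatFunc F) -
      Matrix.scalar (Fin n) (RatFunc.X : RatFunc F)) :
    (∀ i : Fin n, B⁻¹ i i = 1 / (RatFunc.C θ - RatFunc.X)) ∧
      (∀ i j : Fin n, i < j → ∃ d : ℕ → F,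
        B⁻¹ i j = ∑ k ∈ Finset.Icc 2 n, RatFunc.C (d k) / (RatFunc.X - RatFunc.C θ) ^ k) := by
  set w : RatFunc F := RatFunc.X - RatFunc.C θ
  have hw : w ≠ 0 := sub_ne_zero.2 fun h => Polynomial.X_ne_C θ <|
    RatFunc.algebraMap_injective F (by simpa [RatFunc.algebraMap_X, RatFunc.algebraMap_C] using h)
  have hB' : B = U.map RatFunc.C - Matrix.scalar (Fin n) w := by
    subst hA hB
    ext i j
    rcases eq_or_ne i j with rfl | h
    · simp only [Matrix.sub_apply, Matrix.map_apply, Matrix.add_apply, Matrix.smul_apply,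
        Matrix.one_apply_eq, Matrix.scalar_apply, Matrix.diagonal_apply_eq, smul_eq_mul, mul_one,
        map_add, w]
      ring
    · simp [h]
  have hinv : ∀ i j, B⁻¹ i j = ∑ m ∈ range n, -(RatFunc.C ((U ^ m) i j) / w ^ (m + 1)) := by
    intro i j
    rw [hB', Matrix.inv_sub_scalar_of_pow_eq_zero (by
      rw [← Matrix.map_pow, Matrix.pow_card_eq_zero_of_strictUpperTriangular hU,
        Matrix.map_zero _ (map_zero _)]) hw]
    simp [Matrix.sum_apply, ← Matrix.map_pow, div_eq_inv_mul]
  refine ⟨fun i => ?_, fun i j hij => ⟨fun k => -(U ^ (k - 1)) i j, ?_⟩⟩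
  · rw [hinv, sum_eq_single_of_mem 0 (by simp [i.pos]) fun m _ hm => by
      rw [Matrix.pow_apply_eq_zero_of_lt_add hU m (by omega), map_zero, zero_div, neg_zero]]
    rw [pow_zero, Matrix.one_apply_eq, map_one, zero_add, pow_one, ← div_neg, neg_sub]
  · rw [hinv, sum_range_eq_add_sum_Icc_two _ (by omega), pow_zero, Matrix.one_apply_ne hij.ne,
      map_zero, zero_div, neg_zero, zero_add]
    refine sum_congr rfl fun k hk => ?_
    rw [Nat.sub_add_cancel (by simp at hk; omega), map_neg, neg_div]
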